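/- Let Z = {a, b, c} be a type with exactly three distinct elements, P : Z → Z → ℝ a row-stochastic matrix with zero diagonal (P(a,a) = P(b,b) = P(c,c) = 0) that is irreducible, and V : Z → Z → ℝ a matrix with all entries positive. Writing p_{xy} = P(x,y) and v_{xy} = V(x,y), the mean weighted hitting time satisfies H(V, a, c) = (v_{ac}·p_{ac} + p_{ab}·v_{ab} + p_{ab}·(v_{bc}·p_{bc} + p_{ba}·v_{ba})) / (1 − p_{ab}·p_{ba}), and the denominator 1 − p_{ab}·p_{ba} is positive. -/

import Mathlib

open scoped Classical

/-- Probability of a path `x = (x₀, …, x_m)` of length `m`: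
`Prob(x) = ∏_{i=1}^m P(x_{i-1}, x_i)`. -/
def pathProb {Z : Type*} (P : Z → Z → ℝ) {m : ℕ} (x : Fin (m + 1) → Z) : ℝ :=
  ∏ i : Fin m, P (x i.castSucc) (x i.succ)

/-- `P` is a row-stochastic matrix. -/
def RowStochastic {Z : Type*} [Fintype Z] (P : Z → Z → ℝ) : Prop :=
  (∀ a b, 0 ≤ P a b) ∧ ∀ a, ∑ b, P a b = 1

/-- The chain is irreducible: for all `a b` there is `m ≥ 1` with `(P^m)(a,b) > 0`. -/
def IsIrreducibleChain {Z : Type*} [Fintype Z] [DecidableEq Z] (P : Z → Z → ℝ) : Prop :=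
  ∀ a b : Z, ∃ m : ℕ, 1 ≤ m ∧ 0 < (Matrix.of P ^ m) a b

/-- Weight of a path `x = (x₀, …, x_m)` with weight matrix `V`:
`Weight(V,x) = ∑_{i=1}^m V(x_{i-1}, x_i)`. -/
def pathWeight {Z : Type*} (V : Z → Z → ℝ) {m : ℕ} (x : Fin (m + 1) → Z) : ℝ :=
  ∑ i : Fin m, V (x i.castSucc) (x i.succ)

/-- The mean weighted hitting time from `a` to `b`:
`H(V,a,b) = ∑_{m=1}^∞ ∑_{x ∈ S^m_{⟨a,b⟩}} Weight(V,x)·Prob(x)`. -/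
noncomputable def weightedHittingTime {Z : Type*} [Fintype Z] (P V : Z → Z → ℝ)
    (a b : Z) : ℝ :=
  ∑' m : ℕ, ∑ x ∈ Finset.univ.filter (fun x : Fin (m + 1 + 1) → Z =>
      x 0 = a ∧ x (Fin.last (m + 1)) = b ∧
      ∀ i : Fin (m + 1 + 1), i < Fin.last (m + 1) → x i ≠ b),
    pathWeight V x * pathProb P x

/-!
Because the diagonal of `P` vanishes, the only path from `a` that first reaches `c` after `m + 1`
steps and has nonzero probability is `a, b, a, b, …, c`. Its probability `Q m` and weight `W m`
satisfy `Q (m + 2) = q * Q m` and `W (m + 2) = v_ab + v_ba + W m` with `q = p_ab * p_ba`, so the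
hitting time is an arithmetico-geometric series in `q`. Irreducibility forces a transition from
`{a, b}` to `c`, whence `q < 1`; and the row sums give `Q 0 + Q 1 = p_ac + p_ab * p_bc = 1 - q`,
which collapses the sum to the stated formula.
-/

open Finset

section Paths

variable {Z : Type*}

lemma pathProb_cons (P : Z → Z → ℝ) {m : ℕ} (u : Z) (x : Fin (m + 1) → Z) :
    pathProb P (Fin.cons u x : Fin (m + 2) → Z) = P u (x 0) * pathProb P x := by
  simp only [pathProb, Fin.prod_univ_succ (n := m), ← Fin.succ_castSucc, Fin.cons_succ,
    Fin.castSucc_zero, Fin.cons_zero]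

lemma pathWeight_cons (V : Z → Z → ℝ) {m : ℕ} (u : Z) (x : Fin (m + 1) → Z) :
    pathWeight V (Fin.cons u x : Fin (m + 2) → Z) = V u (x 0) + pathWeight V x := by
  simp only [pathWeight, Fin.sum_univ_succ (n := m), ← Fin.succ_castSucc, Fin.cons_succ,
    Fin.castSucc_zero, Fin.cons_zero]

end Paths

/-- The set `S^{m+1}_{⟨a,b⟩}`: note the shift, `m` indexes paths with `m + 1` steps. -/
noncomputable def firstPassagePaths {Z : Type*} [Fintype Z] (a b : Z) (m : ℕ) :
    Finset (Fin (m + 2) → Z) :=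
  univ.filter fun x => x 0 = a ∧ x (Fin.last (m + 1)) = b ∧
    ∀ i : Fin (m + 1 + 1), i < Fin.last (m + 1) → x i ≠ b

lemma weightedHittingTime_eq_tsum {Z : Type*} [Fintype Z] (P V : Z → Z → ℝ) (a b : Z) :
    weightedHittingTime P V a b =
      ∑' m, ∑ x ∈ firstPassagePaths a b m, pathWeight V x * pathProb P x :=
  rfl

section ThreeStates

variable {Z : Type*}

/-- The path `a, b, a, b, …, c` with `m + 1` steps. -/
def alternatingPath (a b c : Z) : (m : ℕ) → Fin (m + 2) → Z
  | 0 => ![a, c]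
  | m + 1 => Fin.cons a (alternatingPath b a c m)

@[simp]
lemma alternatingPath_apply_zero (a b c : Z) (m : ℕ) : alternatingPath a b c m 0 = a := by
  cases m <;> rfl

lemma pathProb_alternatingPath_zero (P : Z → Z → ℝ) (a b c : Z) :
    pathProb P (alternatingPath a b c 0) = P a c := by
  simp [pathProb, alternatingPath]

lemma pathWeight_alternatingPath_zero (V : Z → Z → ℝ) (a b c : Z) :
    pathWeight V (alternatingPath a b c 0) = V a c := by
  simp [pathWeight, alternatingPath]

lemma pathProb_alternatingPath_succ (P : Z → Z → ℝ) (a b c : Z) (m : ℕ) :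
    pathProb P (alternatingPath a b c (m + 1)) = P a b * pathProb P (alternatingPath b a c m) := by
  rw [alternatingPath, pathProb_cons, alternatingPath_apply_zero]

lemma pathWeight_alternatingPath_succ (V : Z → Z → ℝ) (a b c : Z) (m : ℕ) :
    pathWeight V (alternatingPath a b c (m + 1)) =
      V a b + pathWeight V (alternatingPath b a c m) := by
  rw [alternatingPath, pathWeight_cons, alternatingPath_apply_zero]

lemma pathProb_alternatingPath_add_two (P : Z → Z → ℝ) (a b c : Z) (m : ℕ) :
    pathProb P (alternatingPath a b c (m + 2)) =
      P a b * P b a * pathProb P (alternatingPath a b c m) := by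
  rw [pathProb_alternatingPath_succ, pathProb_alternatingPath_succ, mul_assoc]

lemma pathWeight_alternatingPath_add_two (V : Z → Z → ℝ) (a b c : Z) (m : ℕ) :
    pathWeight V (alternatingPath a b c (m + 2)) =
      V a b + V b a + pathWeight V (alternatingPath a b c m) := by
  rw [pathWeight_alternatingPath_succ, pathWeight_alternatingPath_succ, add_assoc]

variable [Fintype Z]

lemma alternatingPath_mem_firstPassagePaths {a b c : Z} (hac : a ≠ c) (hbc : b ≠ c) (m : ℕ) :
    alternatingPath a b c m ∈ firstPassagePaths a c m := by
  induction m generalizing a b with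
  | zero => simp [firstPassagePaths, alternatingPath, hac]
  | succ m ih =>
    have := ih hbc hac
    simp only [firstPassagePaths, mem_filter, mem_univ, true_and] at this ⊢
    refine ⟨rfl, by simpa [alternatingPath] using this.2.1, fun i hi => ?_⟩
    induction i using Fin.cases with
    | zero => exact hac
    | succ j => exact this.2.2 j (by simpa [Fin.lt_def] using hi)

lemma eq_alternatingPath_of_pathProb_ne_zero {P : Z → Z → ℝ} {a b c : Z}
    (hZ : ∀ z, z = a ∨ z = b ∨ z = c) (haa : P a a = 0) (hbb : P b b = 0) {m : ℕ}
    {x : Fin (m + 2) → Z} (hx : x ∈ firstPassagePaths a c m) (hpx : pathProb P x ≠ 0) :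
    x = alternatingPath a b c m := by
  induction m generalizing a b with
  | zero =>
    simp only [firstPassagePaths, mem_filter, mem_univ, true_and] at hx
    ext i
    fin_cases i
    · exact hx.1
    · exact hx.2.1
  | succ m ih =>
    obtain ⟨u, y, rfl⟩ : ∃ u y, x = Fin.cons u y :=
      ⟨x 0, Fin.tail x, (Fin.cons_self_tail x).symm⟩
    simp only [firstPassagePaths, mem_filter, mem_univ, true_and, Fin.cons_zero,
      Fin.cons_last] at hx
    obtain ⟨hu, hy_last, hy_ne⟩ := hx
    subst u
    rw [pathProb_cons, mul_ne_zero_iff] at hpx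
    have hy0c : y 0 ≠ c := by simpa using hy_ne (Fin.succ 0) (by simp [Fin.lt_def])
    have hy0 : y 0 = b := by
      rcases hZ (y 0) with h | h | h
      · rw [h, haa] at hpx
        exact absurd rfl hpx.1
      · exact h
      · exact absurd h hy0c
    have hy : y ∈ firstPassagePaths b c m := by
      simp only [firstPassagePaths, mem_filter, mem_univ, true_and]
      refine ⟨hy0, hy_last, fun i hi => ?_⟩
      simpa using hy_ne i.succ (by simpa [Fin.lt_def] using hi)
    have hZ' : ∀ z, z = b ∨ z = a ∨ z = c := fun z => by have := hZ z; tauto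
    rw [alternatingPath, ih hZ' hbb haa hy hpx.2]

lemma sum_firstPassagePaths_mul_pathProb {P : Z → Z → ℝ} {a b c : Z}
    (hZ : ∀ z, z = a ∨ z = b ∨ z = c) (hac : a ≠ c) (hbc : b ≠ c) (haa : P a a = 0)
    (hbb : P b b = 0) (m : ℕ) (f : (Fin (m + 2) → Z) → ℝ) :
    ∑ x ∈ firstPassagePaths a c m, f x * pathProb P x =
      f (alternatingPath a b c m) * pathProb P (alternatingPath a b c m) := by
  refine sum_eq_single_of_mem _ (alternatingPath_mem_firstPassagePaths hac hbc m) fun x hx hne => ?_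
  by_contra h
  exact hne (eq_alternatingPath_of_pathProb_ne_zero hZ haa hbb hx (right_ne_zero_of_mul h))

end ThreeStates

lemma hasSum_mul_of_add_two {W Q : ℕ → ℝ} {w q : ℝ} (hq : ‖q‖ < 1)
    (hW : ∀ m, W (m + 2) = w + W m) (hQ : ∀ m, Q (m + 2) = q * Q m) :
    HasSum (fun m => W m * Q m)
      ((W 0 * Q 0 + W 1 * Q 1) / (1 - q) + w * q * (Q 0 + Q 1) / (1 - q) ^ 2) := by
  have hq1 : 1 - q ≠ 0 := sub_ne_zero.2 (ne_of_lt ((le_abs_self q).trans_lt hq)).symm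
  have hW' : ∀ j k : ℕ, W (2 * k + j) = k * w + W j := by
    intro j k
    induction k with
    | zero => simp
    | succ k ih => rw [show 2 * (k + 1) + j = 2 * k + j + 2 by ring, hW, ih]; push_cast; ring
  have hQ' : ∀ j k : ℕ, Q (2 * k + j) = q ^ k * Q j := by
    intro j k
    induction k with
    | zero => simp
    | succ k ih => rw [show 2 * (k + 1) + j = 2 * k + j + 2 by ring, hQ, ih, pow_succ']; ring
  have parity : ∀ j, HasSum (fun k => W (2 * k + j) * Q (2 * k + j))
      (Q j * (w * (q / (1 - q) ^ 2) + W j * (1 - q)⁻¹)) := fun j => by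
    refine ((((hasSum_coe_mul_geometric_of_norm_lt_one hq).mul_left w).add
      ((hasSum_geometric_of_norm_lt_one hq).mul_left (W j))).mul_left (Q j)).congr_fun fun k => ?_
    rw [hW', hQ']
    ring
  convert HasSum.even_add_odd (f := fun m => W m * Q m) (parity 0) (parity 1) using 1
  field_simp
  ring

lemma Matrix.pow_apply_eq_zero_of_closed {n R : Type*} [Fintype n] [DecidableEq n] [Semiring R]
    {M : Matrix n n R} {S : Set n} (hM : ∀ u ∈ S, ∀ v ∉ S, M u v = 0) (k : ℕ) :
    ∀ u ∈ S, ∀ v ∉ S, (M ^ k) u v = 0 := by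
  induction k with
  | zero => exact fun u hu v hv => Matrix.one_apply_ne (ne_of_mem_of_not_mem hu hv)
  | succ k ih =>
    intro u hu v hv
    rw [pow_succ', Matrix.mul_apply]
    refine sum_eq_zero fun w _ => ?_
    by_cases hw : w ∈ S
    · rw [ih w hw v hv, mul_zero]
    · rw [hM u hu w hw, zero_mul]

lemma IsIrreducibleChain.exists_ne_zero_of_mem_of_notMem {Z : Type*} [Fintype Z] [DecidableEq Z]
    {P : Z → Z → ℝ} (hP : IsIrreducibleChain P) {S : Set Z} {a c : Z} (ha : a ∈ S)
    (hc : c ∉ S) :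
    ∃ u ∈ S, ∃ v ∉ S, P u v ≠ 0 := by
  by_contra! h
  obtain ⟨m, -, hm⟩ := hP a c
  exact hm.ne' (Matrix.pow_apply_eq_zero_of_closed (M := Matrix.of P) h m a ha c hc)

lemma sum_eq_add_add_of_forall_eq_or {Z : Type*} [Fintype Z] {a b c : Z} (hab : a ≠ b)
    (hac : a ≠ c) (hbc : b ≠ c) (hZ : ∀ z, z = a ∨ z = b ∨ z = c) (f : Z → ℝ) :
    ∑ z, f z = f a + f b + f c := by
  have huniv : (univ : Finset Z) = {a, b, c} := by
    ext z
    simp [hZ z]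
  rw [huniv, sum_insert (by simp [hab, hac]), sum_insert (by simp [hbc]), sum_singleton, add_assoc]

lemma mul_lt_one_of_isIrreducibleChain {Z : Type*} [Fintype Z] [DecidableEq Z] {P : Z → Z → ℝ}
    {a b c : Z} (hirr : IsIrreducibleChain P) (hnn : ∀ u v, 0 ≤ P u v)
    (hZ : ∀ z, z = a ∨ z = b ∨ z = c) (hac : a ≠ c) (hbc : b ≠ c)
    (ha : P a b + P a c = 1) (hb : P b a + P b c = 1) : P a b * P b a < 1 := by
  obtain ⟨u, hu, v, hv, huv⟩ := hirr.exists_ne_zero_of_mem_of_notMem (S := {a, b}) (c := c)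
    (Set.mem_insert a {b}) (by simp [hac.symm, hbc.symm])
  have hvc : v = c := by
    simp only [Set.mem_insert_iff, Set.mem_singleton_iff, not_or] at hv
    exact (hZ v).resolve_left hv.1 |>.resolve_left hv.2
  subst hvc
  rcases hu with rfl | rfl
  · nlinarith [(hnn u v).lt_of_ne' huv, hnn u b, hnn b u, hnn b v]
  · nlinarith [(hnn u v).lt_of_ne' huv, hnn a u, hnn u a, hnn a v]

theorem stmt_16_general {Z : Type*} [Fintype Z] [DecidableEq Z] (a b c : Z)
    (hab : a ≠ b) (hac : a ≠ c) (hbc : b ≠ c) (hZ : ∀ z : Z, z = a ∨ z = b ∨ z = c)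
    (P : Z → Z → ℝ) (hP : RowStochastic P)
    (hdiag : P a a = 0 ∧ P b b = 0 ∧ P c c = 0)
    (hirr : IsIrreducibleChain P)
    (V : Z → Z → ℝ) :
    weightedHittingTime P V a c =
      (V a c * P a c + P a b * V a b + P a b * (V b c * P b c + P b a * V b a)) /
        (1 - P a b * P b a) ∧
    0 < 1 - P a b * P b a := by
  obtain ⟨hnn, hrow⟩ := hP
  have hrow_a : P a b + P a c = 1 := by
    linarith [hrow a, sum_eq_add_add_of_forall_eq_or hab hac hbc hZ (P a), hdiag.1]
  have hrow_b : P b a + P b c = 1 := by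
    linarith [hrow b, sum_eq_add_add_of_forall_eq_or hab hac hbc hZ (P b), hdiag.2.1]
  have hq := mul_lt_one_of_isIrreducibleChain hirr hnn hZ hac hbc hrow_a hrow_b
  have hq_norm : ‖P a b * P b a‖ < 1 := by
    rwa [Real.norm_of_nonneg (mul_nonneg (hnn a b) (hnn b a))]
  refine ⟨?_, sub_pos.2 hq⟩
  have hsum := hasSum_mul_of_add_two (W := fun m => pathWeight V (alternatingPath a b c m))
    (Q := fun m => pathProb P (alternatingPath a b c m)) hq_norm
    (pathWeight_alternatingPath_add_two V a b c)
    (pathProb_alternatingPath_add_two P a b c)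
  simp only [pathWeight_alternatingPath_succ, pathProb_alternatingPath_succ,
    pathWeight_alternatingPath_zero, pathProb_alternatingPath_zero] at hsum
  rw [weightedHittingTime_eq_tsum]
  simp only [sum_firstPassagePaths_mul_pathProb hZ hac hbc hdiag.1 hdiag.2.1]
  rw [hsum.tsum_eq]
  have hne : 1 - P a b * P b a ≠ 0 := (sub_pos.2 hq).ne'
  rw [show P a c = 1 - P a b by linarith, show P b c = 1 - P b a by linarith]
  field_simp
  ring

theorem stmt_16 {Z : Type*} [Fintype Z] [DecidableEq Z] (a b c : Z)
    (hab : a ≠ b) (hac : a ≠ c) (hbc : b ≠ c) (hZ : ∀ z : Z, z = a ∨ z = b ∨ z = c)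
    (P : Z → Z → ℝ) (hP : RowStochastic P)
    (hdiag : P a a = 0 ∧ P b b = 0 ∧ P c c = 0)
    (hirr : IsIrreducibleChain P)
    (V : Z → Z → ℝ) (hV : ∀ u v : Z, 0 < V u v) :
    weightedHittingTime P V a c =
      (V a c * P a c + P a b * V a b + P a b * (V b c * P b c + P b a * V b a)) /
        (1 - P a b * P b a) ∧
    0 < 1 - P a b * P b a :=
  stmt_16_general a b c hab hac hbc hZ P hP hdiag hirr V
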